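/- Let n ≥ 1 be an integer and a, b, a', b' ∈ ZMod n. Then there exists a 4×4 real orthogonal matrix P with det P = 1 such that P⁻¹·W(a,b)·P = W(a',b') if and only if the unordered pair {a,b} equals {a',b'} or equals {−a',−b'}; that is, if and only if (a = a' and b = b'), or (a = b' and b = a'), or (a = −a' and b = −b'), or (a = −b' and b = −a'). -/

import Mathlib

/-!
Write `W(a,b)` as the rotation by `z = exp(2πia/n)` in the first coordinate plane and by
`w = exp(2πib/n)` in the second. Conjugation by `P ∈ SO(4)` preserves `tr W = 2(Re z + Re w)`,
`tr W² = 2(Re z² + Re w²)` and, because `Pf(Pᵀ A P) = det P · Pf A`, also the Pfaffian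
`Pf(W - Wᵀ) = 4 Im z Im w`. The traces determine `{Re z, Re w}`, so each of `z, w` is fixed up to
conjugation, and the Pfaffian forces both or neither to be conjugated. Conversely, exchanging the
two planes and `diag(1,-1,1,-1)` lie in `SO(4)` and realise the swap and the
conjugation.
-/

/-- The 2×2 rotation matrix through angle `2πa/n`, for `a : ZMod n`. -/
noncomputable def rotMat (n : ℕ) (a : ZMod n) : Matrix (Fin 2) (Fin 2) ℝ :=
  !![Real.cos (2 * Real.pi * a.val / n), -Real.sin (2 * Real.pi * a.val / n);
     Real.sin (2 * Real.pi * a.val / n),  Real.cos (2 * Real.pi * a.val / n)]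

/-- The 4×4 block-diagonal matrix with blocks `rotMat n a` and `rotMat n b`. -/
noncomputable def Wmat (n : ℕ) (a b : ZMod n) : Matrix (Fin 4) (Fin 4) ℝ :=
  Matrix.reindex finSumFinEquiv finSumFinEquiv
    (Matrix.fromBlocks (rotMat n a) 0 0 (rotMat n b))

open Matrix

section Algebra

variable {K : Type*} [Field K] [NeZero (2 : K)]

theorem eq_and_eq_or_eq_and_eq_of_add_eq_of_sq_add_sq_eq {x y x' y' : K}
    (hsum : x + y = x' + y') (hsq : x ^ 2 + y ^ 2 = x' ^ 2 + y' ^ 2) :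
    (x = x' ∧ y = y') ∨ (x = y' ∧ y = x') := by
  have h : (2 : K) * ((x - x') * (x - y')) = 0 := by
    linear_combination (2 * x - x - y - x' - y') * hsum + hsq
  rcases mul_eq_zero.1 ((mul_eq_zero.1 h).resolve_left two_ne_zero) with h | h
  · exact .inl ⟨by linear_combination h, by linear_combination hsum - h⟩
  · exact .inr ⟨by linear_combination h, by linear_combination hsum - h⟩

theorem eq_and_eq_or_eq_neg_and_eq_neg_of_sq_eq_of_mul_eq {x y x' y' : K}
    (hx : x ^ 2 = x' ^ 2) (hy : y ^ 2 = y' ^ 2) (hxy : x * y = x' * y') :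
    (x = x' ∧ y = y') ∨ (x = -x' ∧ y = -y') := by
  rcases sq_eq_sq_iff_eq_or_eq_neg.1 hx with hx | hx <;>
    rcases sq_eq_sq_iff_eq_or_eq_neg.1 hy with hy | hy
  · exact .inl ⟨hx, hy⟩
  · have h : (2 : K) * (x' * y') = 0 := by linear_combination -hxy + y * hx + x' * hy
    rcases mul_eq_zero.1 ((mul_eq_zero.1 h).resolve_left two_ne_zero) with h | h
    · exact .inr ⟨by linear_combination hx + 2 * h, hy⟩
    · exact .inl ⟨hx, by linear_combination hy - 2 * h⟩
  · have h : (2 : K) * (x' * y') = 0 := by linear_combination -hxy + y * hx - x' * hy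
    rcases mul_eq_zero.1 ((mul_eq_zero.1 h).resolve_left two_ne_zero) with h | h
    · exact .inl ⟨by linear_combination hx - 2 * h, hy⟩
    · exact .inr ⟨hx, by linear_combination hy + 2 * h⟩
  · exact .inr ⟨hx, hy⟩

end Algebra

namespace Circle

theorem re_sq_add_im_sq (z : Circle) : (z : ℂ).re ^ 2 + (z : ℂ).im ^ 2 = 1 := by
  simpa [Complex.normSq_apply, sq] using normSq_coe z

theorem eq_iff_re_eq_and_im_eq {z w : Circle} :
    z = w ↔ (z : ℂ).re = (w : ℂ).re ∧ (z : ℂ).im = (w : ℂ).im := by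
  rw [← coe_inj, Complex.ext_iff]

theorem eq_inv_iff_re_eq_and_im_eq_neg {z w : Circle} :
    z = w⁻¹ ↔ (z : ℂ).re = (w : ℂ).re ∧ (z : ℂ).im = -(w : ℂ).im := by
  rw [← coe_inj, coe_inv_eq_conj, Complex.ext_iff, Complex.conj_re, Complex.conj_im]

theorem eq_and_eq_or_eq_inv_and_eq_inv_of_re_eq {z w z' w' : Circle}
    (hz : (z : ℂ).re = (z' : ℂ).re) (hw : (w : ℂ).re = (w' : ℂ).re)
    (him : (z : ℂ).im * (w : ℂ).im = (z' : ℂ).im * (w' : ℂ).im) :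
    (z = z' ∧ w = w') ∨ (z = z'⁻¹ ∧ w = w'⁻¹) := by
  have hz2 : (z : ℂ).im ^ 2 = (z' : ℂ).im ^ 2 := by
    linear_combination re_sq_add_im_sq z - re_sq_add_im_sq z' - hz * ((z : ℂ).re + (z' : ℂ).re)
  have hw2 : (w : ℂ).im ^ 2 = (w' : ℂ).im ^ 2 := by
    linear_combination re_sq_add_im_sq w - re_sq_add_im_sq w' - hw * ((w : ℂ).re + (w' : ℂ).re)
  rw [eq_inv_iff_re_eq_and_im_eq_neg, eq_inv_iff_re_eq_and_im_eq_neg, eq_iff_re_eq_and_im_eq,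
    eq_iff_re_eq_and_im_eq]
  simp only [hz, hw, true_and]
  exact eq_and_eq_or_eq_neg_and_eq_neg_of_sq_eq_of_mul_eq hz2 hw2 him

theorem pair_eq_or_swap_or_inv_of_re_add_eq {z w z' w' : Circle}
    (hsum : (z : ℂ).re + (w : ℂ).re = (z' : ℂ).re + (w' : ℂ).re)
    (hsq : (z : ℂ).re ^ 2 + (w : ℂ).re ^ 2 = (z' : ℂ).re ^ 2 + (w' : ℂ).re ^ 2)
    (him : (z : ℂ).im * (w : ℂ).im = (z' : ℂ).im * (w' : ℂ).im) :
    (z = z' ∧ w = w') ∨ (z = w' ∧ w = z') ∨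
      (z = z'⁻¹ ∧ w = w'⁻¹) ∨ (z = w'⁻¹ ∧ w = z'⁻¹) := by
  rcases eq_and_eq_or_eq_and_eq_of_add_eq_of_sq_add_sq_eq hsum hsq with ⟨hz, hw⟩ | ⟨hz, hw⟩
  · rcases eq_and_eq_or_eq_inv_and_eq_inv_of_re_eq hz hw him with h | h <;> tauto
  · rw [mul_comm (z' : ℂ).im] at him
    rcases eq_and_eq_or_eq_inv_and_eq_inv_of_re_eq hz hw him with h | h <;> tauto

end Circle

section Pfaffian

variable {R : Type*} [CommRing R]

/-- Reads only the entries above the diagonal: the Pfaffian when `A` is skew-symmetric. -/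
def pfaffian4 (A : Matrix (Fin 4) (Fin 4) R) : R :=
  A 0 1 * A 2 3 - A 0 2 * A 1 3 + A 0 3 * A 1 2

theorem pfaffian4_transpose_mul_sub_transpose_mul (P M : Matrix (Fin 4) (Fin 4) R) :
    pfaffian4 (Pᵀ * (M - Mᵀ) * P) = P.det * pfaffian4 (M - Mᵀ) := by
  simp only [pfaffian4, det_succ_row_zero, det_unique, Fin.sum_univ_succ, Finset.univ_unique,
    Finset.sum_singleton, Fin.succAbove, submatrix_apply, mul_apply, transpose_apply,
    Matrix.sub_apply, Fin.isValue, Fin.succ_zero_eq_one, Fin.succ_one_eq_two, Fin.reduceSucc,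
    Fin.default_eq_zero, Fin.castSucc_zero, Fin.castSucc_one, Fin.reduceCastSucc, Fin.castSucc_succ,
    Fin.reduceLT, Fin.lt_one_iff, Fin.reduceEq, Fin.succ_pos, lt_self_iff_false, not_lt_zero,
    ↓reduceIte, Fin.val_succ, Fin.val_eq_zero, Fin.coe_ofNat_eq_mod, Nat.zero_mod, Nat.reduceAdd]
  ring

end Pfaffian

section SOConj

variable {ι R : Type*} [Fintype ι] [DecidableEq ι] [CommRing R]

def IsSOConj (A B : Matrix ι ι R) : Prop :=
  ∃ P ∈ specialOrthogonalGroup ι R, P⁻¹ * A * P = B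

theorem IsSOConj.refl (A : Matrix ι ι R) : IsSOConj A A :=
  ⟨1, one_mem _, by simp⟩

theorem IsSOConj.trans {A B C : Matrix ι ι R} : IsSOConj A B → IsSOConj B C → IsSOConj A C
  | ⟨P, hP, hPAB⟩, ⟨Q, hQ, hQBC⟩ =>
    ⟨P * Q, mul_mem hP hQ, by
      rw [Matrix.mul_inv_rev, ← hQBC, ← hPAB]; simp only [Matrix.mul_assoc]⟩

theorem isSOConj_of_transpose_eq_of_mul_self_eq_one {A B P : Matrix ι ι R} (hsymm : Pᵀ = P)
    (hsq : P * P = 1) (hdet : P.det = 1) (h : P * A * P = B) : IsSOConj A B :=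
  have hP : P ∈ orthogonalGroup ι R := (mem_orthogonalGroup_iff ι R).2 (by rw [hsymm, hsq])
  ⟨P, mem_specialOrthogonalGroup_iff.2 ⟨hP, hdet⟩, by rwa [inv_eq_left_inv hsq]⟩

theorem isUnit_of_mem_specialOrthogonalGroup {P : Matrix ι ι R}
    (hP : P ∈ specialOrthogonalGroup ι R) : IsUnit P :=
  (isUnit_iff_isUnit_det P).2 ((mem_specialOrthogonalGroup_iff.1 hP).2 ▸ isUnit_one)

theorem IsSOConj.trace_eq {A B : Matrix ι ι R} (h : IsSOConj A B) : B.trace = A.trace := by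
  obtain ⟨P, hP, rfl⟩ := h
  exact trace_conj' (isUnit_of_mem_specialOrthogonalGroup hP) A

theorem IsSOConj.mul_self {A B : Matrix ι ι R} (h : IsSOConj A B) : IsSOConj (A * A) (B * B) := by
  obtain ⟨P, hP, rfl⟩ := h
  refine ⟨P, hP, ?_⟩
  have hPP : P * P⁻¹ = 1 :=
    mul_nonsing_inv P ((isUnit_iff_isUnit_det P).1 (isUnit_of_mem_specialOrthogonalGroup hP))
  calc P⁻¹ * (A * A) * P = P⁻¹ * A * (P * P⁻¹) * A * P := by
        rw [hPP, Matrix.mul_one]; simp only [Matrix.mul_assoc]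
    _ = P⁻¹ * A * P * (P⁻¹ * A * P) := by simp only [Matrix.mul_assoc]

theorem IsSOConj.pfaffian4_sub_transpose_eq {A B : Matrix (Fin 4) (Fin 4) R} (h : IsSOConj A B) :
    pfaffian4 (B - Bᵀ) = pfaffian4 (A - Aᵀ) := by
  obtain ⟨P, hP, rfl⟩ := h
  obtain ⟨hPo, hdet⟩ := mem_specialOrthogonalGroup_iff.1 hP
  rw [inv_eq_left_inv ((mem_orthogonalGroup_iff' _ R).1 hPo)]
  have hskew : Pᵀ * A * P - (Pᵀ * A * P)ᵀ = Pᵀ * (A - Aᵀ) * P := by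
    simp only [transpose_mul, transpose_transpose, Matrix.mul_sub, Matrix.sub_mul, Matrix.mul_assoc]
  rw [hskew, pfaffian4_transpose_mul_sub_transpose_mul, hdet, one_mul]

end SOConj

def blockRot (z w : Circle) : Matrix (Fin 4) (Fin 4) ℝ :=
  !![(z : ℂ).re, -(z : ℂ).im, 0, 0;
     (z : ℂ).im, (z : ℂ).re, 0, 0;
     0, 0, (w : ℂ).re, -(w : ℂ).im;
     0, 0, (w : ℂ).im, (w : ℂ).re]

theorem blockRot_mul (z w z' w' : Circle) :
    blockRot z w * blockRot z' w' = blockRot (z * z') (w * w') := by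
  ext i j
  fin_cases i <;> fin_cases j <;>
    simp only [blockRot, Fin.zero_eta, Fin.mk_one, Fin.reduceFinMk, Fin.isValue, mul_apply,
      Fin.sum_univ_four, of_apply, cons_val', cons_val_fin_one, cons_val_zero, cons_val_one,
      cons_val, Circle.coe_mul, Complex.mul_re, Complex.mul_im] <;>
    ring

theorem trace_blockRot (z w : Circle) :
    (blockRot z w).trace = 2 * ((z : ℂ).re + (w : ℂ).re) := by
  simp only [trace, blockRot, diag_apply, of_apply, cons_val', cons_val_fin_one, Fin.sum_univ_four,
    Fin.isValue, cons_val_zero, cons_val_one, cons_val]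
  ring

theorem pfaffian4_blockRot_sub_transpose (z w : Circle) :
    pfaffian4 (blockRot z w - (blockRot z w)ᵀ) = 4 * ((z : ℂ).im * (w : ℂ).im) := by
  simp only [pfaffian4, blockRot, Fin.isValue, Matrix.sub_apply, of_apply, cons_val', cons_val_one,
    cons_val_zero, cons_val_fin_one, transpose_apply, cons_val]
  ring

theorem ZMod.toCircle_re {n : ℕ} [NeZero n] (a : ZMod n) :
    (ZMod.toCircle a : ℂ).re = Real.cos (2 * Real.pi * a.val / n) := by
  rw [ZMod.toCircle_eq_circleExp, Circle.coe_exp, Complex.exp_ofReal_mul_I_re, mul_div_assoc]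

theorem ZMod.toCircle_im {n : ℕ} [NeZero n] (a : ZMod n) :
    (ZMod.toCircle a : ℂ).im = Real.sin (2 * Real.pi * a.val / n) := by
  rw [ZMod.toCircle_eq_circleExp, Circle.coe_exp, Complex.exp_ofReal_mul_I_im, mul_div_assoc]

theorem Wmat_eq_blockRot {n : ℕ} [NeZero n] (a b : ZMod n) :
    Wmat n a b = blockRot (ZMod.toCircle a) (ZMod.toCircle b) := by
  ext i j
  fin_cases i <;> fin_cases j <;>
    simp [Wmat, rotMat, blockRot, ZMod.toCircle_re, ZMod.toCircle_im, finSumFinEquiv, Fin.addCases]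

theorem isSOConj_blockRot_swap (z w : Circle) : IsSOConj (blockRot z w) (blockRot w z) := by
  refine isSOConj_of_transpose_eq_of_mul_self_eq_one
    (P := !![0, 0, 1, 0; 0, 0, 0, 1; 1, 0, 0, 0; 0, 1, 0, 0]) ?_ ?_ ?_ ?_
  · ext i j; fin_cases i <;> fin_cases j <;> rfl
  · ext i j; fin_cases i <;> fin_cases j <;> simp [mul_apply, Fin.sum_univ_four]
  · simp [det_succ_row_zero, Fin.sum_univ_succ, Fin.succAbove]
  · ext i j; fin_cases i <;> fin_cases j <;> simp [blockRot, mul_apply, Fin.sum_univ_four]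

theorem isSOConj_blockRot_inv (z w : Circle) :
    IsSOConj (blockRot z w) (blockRot z⁻¹ w⁻¹) := by
  refine isSOConj_of_transpose_eq_of_mul_self_eq_one (P := diagonal ![1, -1, 1, -1]) ?_ ?_ ?_ ?_
  · exact diagonal_transpose _
  · ext i j; fin_cases i <;> fin_cases j <;> simp
  · simp [det_diagonal, Fin.prod_univ_four]
  · ext i j; fin_cases i <;> fin_cases j <;> simp [blockRot]

theorem isSOConj_blockRot_iff {z w z' w' : Circle} :
    IsSOConj (blockRot z w) (blockRot z' w') ↔
      (z = z' ∧ w = w') ∨ (z = w' ∧ w = z') ∨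
        (z = z'⁻¹ ∧ w = w'⁻¹) ∨ (z = w'⁻¹ ∧ w = z'⁻¹) := by
  constructor
  · intro h
    have htr := h.trace_eq
    have htr_sq := h.mul_self.trace_eq
    have hpf := h.pfaffian4_sub_transpose_eq
    simp only [blockRot_mul, trace_blockRot, Circle.coe_mul, Complex.mul_re] at htr htr_sq
    rw [pfaffian4_blockRot_sub_transpose, pfaffian4_blockRot_sub_transpose] at hpf
    refine Circle.pair_eq_or_swap_or_inv_of_re_add_eq (by linarith) ?_ (by linarith)
    linear_combination -htr_sq / 4 + (Circle.re_sq_add_im_sq z + Circle.re_sq_add_im_sq w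
      - Circle.re_sq_add_im_sq z' - Circle.re_sq_add_im_sq w') / 2
  · rintro (⟨rfl, rfl⟩ | ⟨rfl, rfl⟩ | ⟨rfl, rfl⟩ | ⟨rfl, rfl⟩)
    · exact .refl _
    · exact isSOConj_blockRot_swap _ _
    · simpa using isSOConj_blockRot_inv z'⁻¹ w'⁻¹
    · simpa using
        (isSOConj_blockRot_swap w'⁻¹ z'⁻¹).trans (isSOConj_blockRot_inv z'⁻¹ w'⁻¹)

theorem stmt_11 (n : ℕ) (hn : 1 ≤ n) (a b a' b' : ZMod n) :
    (∃ P : Matrix (Fin 4) (Fin 4) ℝ, P ∈ Matrix.orthogonalGroup (Fin 4) ℝ ∧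
        P.det = 1 ∧ P⁻¹ * Wmat n a b * P = Wmat n a' b') ↔
      ((a = a' ∧ b = b') ∨ (a = b' ∧ b = a') ∨
        (a = -a' ∧ b = -b') ∨ (a = -b' ∧ b = -a')) := by
  have : NeZero n := ⟨by omega⟩
  have key := isSOConj_blockRot_iff (z := ZMod.toCircle a) (w := ZMod.toCircle b)
    (z' := ZMod.toCircle a') (w' := ZMod.toCircle b')
  simpa only [IsSOConj, mem_specialOrthogonalGroup_iff, and_assoc, ← Wmat_eq_blockRot,
    ← AddChar.map_neg_eq_inv, ZMod.injective_toCircle.eq_iff] using key
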